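/- arXiv:2304.02151 — 4 statements merged into one kernel-verified Lean document; each statement's English description precedes it below -/
import Mathlib

section
/- Let R be an algebra over a commutative ring K, σ an algebra endomorphism of R, δ a σ-derivation with δ ∘ σ = q · (σ ∘ δ) for some q ∈ K. Then the q-Leibniz rule holds: for all n ≥ 0 and a, b ∈ R, δ^n(ab) = Σ_{i=0}^{n} [n choose i]_q · σ^{n-i}(δ^i(a)) · δ^{n-i}(b), where [n choose i]_q denotes the Gaussian (q-)binomial coefficient evaluated at q. -/
/-- The Gaussian (q-)binomial coefficient, defined via the q-Pascal recursion
`[n+1, k+1]_q = [n, k]_q + q^(k+1) * [n, k+1]_q`. -/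
def qBinom {K : Type*} [CommRing K] (q : K) : ℕ → ℕ → K
  | _, 0 => 1
  | 0, _ + 1 => 0
  | n + 1, k + 1 => qBinom q n k + q ^ (k + 1) * qBinom q n (k + 1)

lemma qBinom_zero_right {K : Type*} [CommRing K] (q : K) (n : ℕ) : qBinom q n 0 = 1 := by
  cases n <;> rfl

lemma qBinom_eq_zero {K : Type*} [CommRing K] (q : K) :
    ∀ n k : ℕ, n < k → qBinom q n k = 0 := by
  intro n
  induction n with
  | zero =>
    intro k hk
    match k, hk with
    | k + 1, _ => rfl
  | succ n ih =>
    intro k hk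
    match k, hk with
    | k + 1, hk =>
      show qBinom q n k + q ^ (k + 1) * qBinom q n (k + 1) = 0
      rw [ih k (by omega), ih (k + 1) (by omega)]
      ring

/-- The "other" q-Pascal recursion. -/
lemma qBinom_succ_succ' {K : Type*} [CommRing K] (q : K) :
    ∀ n k : ℕ, qBinom q (n + 1) (k + 1) = q ^ (n - k) * qBinom q n k + qBinom q n (k + 1) := by
  intro n
  induction n with
  | zero =>
    intro k
    match k with
    | 0 => show qBinom q 0 0 + q ^ 1 * qBinom q 0 1 = _; simp [qBinom]
    | k + 1 =>
      show qBinom q 0 (k + 1) + q ^ (k + 2) * qBinom q 0 (k + 2) = _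
      simp [qBinom, qBinom_eq_zero q 0 (k + 2) (by omega)]
  | succ n ih =>
    intro k
    match k with
    | 0 =>
      have h0 := ih 0
      simp only [Nat.zero_add, Nat.sub_zero, qBinom_zero_right, mul_one] at h0 ⊢
      show qBinom q (n + 1) 0 + q ^ 1 * qBinom q (n + 1) 1 = _
      conv_lhs => rw [h0]
      conv_rhs =>
        rw [show qBinom q (n + 1) 1 = qBinom q n 0 + q ^ 1 * qBinom q n 1 from rfl]
      simp only [qBinom_zero_right]
      ring
    | k + 1 =>
      show qBinom q (n + 1) (k + 1) + q ^ (k + 2) * qBinom q (n + 1) (k + 2) = _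
      conv_lhs => rw [ih k, ih (k + 1)]
      conv_rhs =>
        rw [show qBinom q (n + 1) (k + 1) = qBinom q n k + q ^ (k + 1) * qBinom q n (k + 1)
              from rfl,
           show qBinom q (n + 1) (k + 2) = qBinom q n (k + 1) + q ^ (k + 2) * qBinom q n (k + 2)
              from rfl]
      have hss : n + 1 - (k + 1) = n - k := by omega
      rw [hss]
      by_cases hkn : k < n
      · have h1 : q ^ (k + 2) * q ^ (n - (k + 1)) = q ^ (n - k) * q ^ (k + 1) := by
          rw [← pow_add, ← pow_add]
          congr 1
          omega
        linear_combination qBinom q n (k + 1) * h1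
      · rw [qBinom_eq_zero q n (k + 1) (by omega)]
        ring

/-- The q-Leibniz rule: if `σ` is an algebra endomorphism and `δ` a `σ`-derivation
with `δ ∘ σ = q • (σ ∘ δ)`, then
`δ^n(ab) = Σ_{i=0}^{n} [n choose i]_q • σ^{n-i}(δ^i a) * δ^{n-i} b`. -/
theorem qLeibniz_rule {K : Type*} [CommRing K] {R : Type*} [Ring R] [Algebra K R]
    (σ : R →ₐ[K] R) (δ : R →ₗ[K] R) (q : K)
    (hLeibniz : ∀ a b : R, δ (a * b) = σ a * δ b + δ a * b)
    (hskew : ∀ r : R, δ (σ r) = q • σ (δ r)) :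
    ∀ (n : ℕ) (a b : R),
      (⇑δ)^[n] (a * b) =
        ∑ i ∈ Finset.range (n + 1),
          qBinom q n i • ((⇑σ)^[n - i] ((⇑δ)^[i] a) * (⇑δ)^[n - i] b) := by
  have hσδ : ∀ (m : ℕ) (r : R), δ ((⇑σ)^[m] r) = q ^ m • (⇑σ)^[m] (δ r) := by
    intro m
    induction m with
    | zero => intro r; simp
    | succ m ihm =>
      intro r
      rw [Function.iterate_succ_apply', hskew, ihm r, map_smul, smul_smul,
        ← Function.iterate_succ_apply' (⇑σ) m (δ r), pow_succ, mul_comm (q ^ m) q]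
  intro n
  induction n with
  | zero =>
    intro a b
    simp [qBinom_zero_right]
  | succ n ih =>
    intro a b
    rw [Function.iterate_succ_apply', ih a b, map_sum]
    have hterm : ∀ i ∈ Finset.range (n + 1),
        δ (qBinom q n i • ((⇑σ)^[n - i] ((⇑δ)^[i] a) * (⇑δ)^[n - i] b)) =
          qBinom q n i • ((⇑σ)^[n + 1 - i] ((⇑δ)^[i] a) * (⇑δ)^[n + 1 - i] b) +
          (q ^ (n - i) * qBinom q n i) •
            ((⇑σ)^[n - i] ((⇑δ)^[i + 1] a) * (⇑δ)^[n - i] b) := by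
      intro i hi
      rw [Finset.mem_range] at hi
      have hni : n + 1 - i = (n - i) + 1 := by omega
      rw [map_smul, hLeibniz, hσδ, hni,
        ← Function.iterate_succ_apply' (⇑σ), ← Function.iterate_succ_apply' (⇑δ),
        ← Function.iterate_succ_apply' (⇑δ),
        smul_mul_assoc, smul_add, smul_smul, mul_comm (qBinom q n i) (q ^ (n - i))]
    rw [Finset.sum_congr rfl hterm, Finset.sum_add_distrib]
    -- now handle the RHS
    rw [Finset.sum_range_succ'
      (fun i => qBinom q (n + 1) i • ((⇑σ)^[n + 1 - i] ((⇑δ)^[i] a) * (⇑δ)^[n + 1 - i] b))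
      (n + 1)]
    simp only [Nat.add_sub_add_right, Nat.sub_zero]
    have hrw : ∀ i ∈ Finset.range (n + 1),
        qBinom q (n + 1) (i + 1) • ((⇑σ)^[n - i] ((⇑δ)^[i + 1] a) * (⇑δ)^[n - i] b) =
          (q ^ (n - i) * qBinom q n i) • ((⇑σ)^[n - i] ((⇑δ)^[i + 1] a) * (⇑δ)^[n - i] b) +
          qBinom q n (i + 1) • ((⇑σ)^[n - i] ((⇑δ)^[i + 1] a) * (⇑δ)^[n - i] b) := by
      intro i _
      rw [qBinom_succ_succ', add_smul]
    rw [Finset.sum_congr rfl hrw, Finset.sum_add_distrib, Finset.sum_range_succ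
      (fun i => qBinom q n (i + 1) • ((⇑σ)^[n - i] ((⇑δ)^[i + 1] a) * (⇑δ)^[n - i] b)) n,
      qBinom_eq_zero q n (n + 1) (by omega), zero_smul, add_zero]
    -- now handle S1 on the LHS
    rw [Finset.sum_range_succ'
      (fun i => qBinom q n i • ((⇑σ)^[n + 1 - i] ((⇑δ)^[i] a) * (⇑δ)^[n + 1 - i] b)) n]
    simp only [Nat.add_sub_add_right, Nat.sub_zero, qBinom_zero_right]
    abel
end

section
/- Let n ≥ 1, ℓ ≥ 1, and let M ∈ M_n(ℤ) be skew-symmetric (Mᵀ = −M). Then the cardinality of the image of the induced map (ℤ/ℓℤ)ⁿ → (ℤ/ℓℤ)ⁿ, v ↦ Mv, is a perfect square. -/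
/-- Torsion elements of `ZMod ℓ`: if `m ∣ ℓ` and `m • a = 0` then `a` is a multiple
of `ℓ / m`. -/
private lemma torsion_mem_aux {ℓ m : ℕ} [NeZero ℓ] (hm : m ∣ ℓ) (hm0 : 0 < m) (a : ZMod ℓ)
    (ha : m • a = 0) : ∃ c : ℕ, a = c • ((ℓ / m : ℕ) : ZMod ℓ) := by
  have hval : ((a.val : ℕ) : ZMod ℓ) = a := ZMod.natCast_rightInverse a
  have h1 : ((m * a.val : ℕ) : ZMod ℓ) = 0 := by
    rw [Nat.cast_mul, hval]
    simpa [nsmul_eq_mul] using ha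
  have h2 : ℓ ∣ m * a.val := (ZMod.natCast_eq_zero_iff _ _).mp h1
  have h3 : ℓ / m ∣ a.val := by
    refine (Nat.mul_dvd_mul_iff_left hm0).mp ?_
    rwa [Nat.mul_div_cancel' hm]
  obtain ⟨c, hc⟩ := h3
  refine ⟨c, ?_⟩
  rw [← hval, hc]
  rw [nsmul_eq_mul]
  push_cast
  ring

/-- A finite abelian group of exponent dividing `ℓ` with a nondegenerate alternating
biadditive pairing into `ZMod ℓ` has square cardinality. -/
private lemma card_sq_of_alt (ℓ : ℕ) [NeZero ℓ] : ∀ c : ℕ, ∀ (V : Type) [AddCommGroup V]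
    [Finite V], ∀ B : V → V → ZMod ℓ,
    (∀ x x' y, B (x + x') y = B x y + B x' y) →
    (∀ x y y', B x (y + y') = B x y + B x y') →
    (∀ x, B x x = 0) →
    (∀ x, (∀ y, B x y = 0) → x = 0) →
    (∀ v : V, ℓ • v = 0) →
    Nat.card V = c → ∃ k : ℕ, c = k ^ 2 := by
  intro c
  induction c using Nat.strong_induction_on with
  | _ c IH =>
  intro V _ _ B hB1 hB2 halt hnd hel hcard
  let Bx : V → V →+ ZMod ℓ := fun x => AddMonoidHom.mk' (B x) (hB2 x)
  let By : V → V →+ ZMod ℓ := fun y => AddMonoidHom.mk' (fun z => B z y) (fun a b => hB1 a b y)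
  have hskew : ∀ x y, B y x = - B x y := by
    intro x y
    have h := halt (x + y)
    rw [hB1, hB2, hB2, halt, halt] at h
    linear_combination h
  by_cases htriv : ∀ v : V, v = 0
  · haveI : Subsingleton V := ⟨fun a b => (htriv a).trans (htriv b).symm⟩
    refine ⟨1, ?_⟩
    rw [← hcard, one_pow]
    exact Nat.card_eq_one_iff_unique.mpr ⟨inferInstance, ⟨0⟩⟩
  push_neg at htriv
  obtain ⟨x₀, hx₀⟩ := htriv
  haveI : Nontrivial V := ⟨x₀, 0, hx₀⟩
  set m := AddMonoid.exponent V with hmdef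
  have hm1 : 1 < m := AddMonoid.one_lt_exponent
  have hm0 : 0 < m := by omega
  haveI : NeZero m := ⟨hm0.ne'⟩
  have hmtor : ∀ v : V, m • v = 0 := fun v => AddMonoid.exponent_nsmul_eq_zero v
  have hmdvd : m ∣ ℓ := AddMonoid.exponent_dvd_of_forall_nsmul_eq_zero hel
  obtain ⟨x, hx⟩ := AddMonoid.exists_addOrderOf_eq_exponent (AddMonoid.ExponentExists.of_finite (G := V))
  -- the image of `B x` is a cyclic subgroup of `ZMod ℓ`; take a generator `e`
  obtain ⟨s, hs⟩ := IsAddCyclic.exists_generator (α := (Bx x).range)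
  set e : ZMod ℓ := (s : ZMod ℓ) with hedef
  have hmS : ∀ a : ZMod ℓ, a ∈ (Bx x).range → m • a = 0 := by
    rintro a ⟨z, rfl⟩
    rw [← map_nsmul, hmtor, map_zero]
  have hinS : ∀ z : V, ∃ cz : ℤ, B x z = cz • e := by
    intro z
    obtain ⟨cz, hcz⟩ := AddSubgroup.mem_zmultiples_iff.mp (hs ⟨B x z, ⟨z, rfl⟩⟩)
    exact ⟨cz, by simpa using congrArg Subtype.val hcz.symm⟩
  have hse : m • e = 0 := hmS _ s.2
  have horde : addOrderOf e = m := by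
    refine Nat.dvd_antisymm (addOrderOf_dvd_of_nsmul_eq_zero hse) ?_
    rw [hmdef, ← hx]
    apply addOrderOf_dvd_of_nsmul_eq_zero
    apply hnd
    intro z
    obtain ⟨cz, hcz⟩ := hinS z
    have h1 : B (addOrderOf e • x) z = addOrderOf e • B x z := map_nsmul (By z) (addOrderOf e) x
    rw [h1, hcz, smul_comm, addOrderOf_nsmul_eq_zero, smul_zero]
  obtain ⟨y, hy⟩ : ∃ y : V, B x y = e := by
    obtain ⟨y, hy⟩ := AddMonoidHom.mem_range.mp s.2
    exact ⟨y, hy⟩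
  -- every m-torsion element of ZMod ℓ is a multiple of e
  have hcover : ∀ a : ZMod ℓ, m • a = 0 → ∃ cc : ℤ, a = cc • e := by
    set e₀ : ZMod ℓ := ((ℓ / m : ℕ) : ZMod ℓ) with he₀
    have he0 : addOrderOf e₀ = m := by
      rw [he₀, ZMod.addOrderOf_coe _ (NeZero.ne ℓ),
        Nat.gcd_eq_right (Nat.div_dvd_of_dvd hmdvd),
        Nat.div_div_self hmdvd (NeZero.ne ℓ)]
    have hmem0 : ∀ a : ZMod ℓ, m • a = 0 → a ∈ AddSubgroup.zmultiples e₀ := by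
      intro a ha
      obtain ⟨cc, hcc⟩ := torsion_mem_aux hmdvd hm0 a ha
      rw [hcc]
      exact AddSubgroup.nsmul_mem _ (AddSubgroup.mem_zmultiples _) cc
    have hle : AddSubgroup.zmultiples e ≤ AddSubgroup.zmultiples e₀ := by
      intro a ha
      obtain ⟨ca, hca⟩ := AddSubgroup.mem_zmultiples_iff.mp ha
      refine hmem0 a ?_
      have hsc : m • (ca • e) = ca • (m • e) := smul_comm m ca e
      rw [← hca, hsc, hse]
      simp
    have heq : AddSubgroup.zmultiples e = AddSubgroup.zmultiples e₀ := by
      refine AddSubgroup.eq_of_le_of_card_ge hle (le_of_eq ?_)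
      rw [Nat.card_zmultiples, Nat.card_zmultiples, horde, he0]
    intro a ha
    have : a ∈ AddSubgroup.zmultiples e := heq ▸ hmem0 a ha
    obtain ⟨cc, hcc⟩ := AddSubgroup.mem_zmultiples_iff.mp this
    exact ⟨cc, hcc.symm⟩
  -- basic pairing values
  have hyx : B y x = -e := by rw [hskew, hy]
  have hzero : ∀ (v : V) (cI : ℤ), (m : ℤ) ∣ cI → cI • v = 0 := by
    rintro v cI ⟨t, rfl⟩
    rw [mul_smul, natCast_zsmul, hmtor]
  have hordx : ∀ cI : ℤ, cI • x = 0 ↔ (m : ℤ) ∣ cI := by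
    intro cI
    rw [← addOrderOf_dvd_iff_zsmul_eq_zero, hx, ← hmdef]
  have horde' : ∀ cI : ℤ, cI • e = 0 ↔ (m : ℤ) ∣ cI := by
    intro cI
    rw [← addOrderOf_dvd_iff_zsmul_eq_zero, horde]
  have hzmod : ∀ cI : ℤ, ((((cI : ZMod m).val : ℤ) - cI : ℤ) : ZMod m) = 0 := by
    intro cI
    push_cast
    simp [ZMod.natCast_val, ZMod.cast_id]
  have hrede : ∀ cI : ℤ, ((cI : ZMod m).val : ℤ) • e = cI • e := by
    intro cI
    rw [← sub_eq_zero, ← sub_smul, horde']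
    exact (ZMod.intCast_zmod_eq_zero_iff_dvd _ _).mp (hzmod cI)
  -- the perpendicular complement of ⟨x, y⟩
  set K : AddSubgroup V := (By x).ker ⊓ (By y).ker with hKdef
  have hKmem : ∀ v : V, v ∈ K ↔ B v x = 0 ∧ B v y = 0 := by
    intro v
    rw [hKdef, AddSubgroup.mem_inf, AddMonoidHom.mem_ker, AddMonoidHom.mem_ker]
    exact Iff.rfl
  -- expansion of the pairing against a combination
  have hBexp0 : ∀ (a b : ℤ) (w : V), B (a • x + b • y) w = a • B x w + b • B y w := by
    intro a b w
    have h2 := map_add (By w) (a • x) (b • y)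
    have h3 := map_zsmul (By w) a x
    have h4 := map_zsmul (By w) b y
    simp only [AddMonoidHom.mk', AddMonoidHom.coe_mk, ZeroHom.coe_mk, By] at h2 h3 h4
    rw [h2, h3, h4]
  have hBw2 : ∀ (a b : ℤ) (w v : V), B w (a • x + b • y + v)
      = a • B w x + b • B w y + B w v := by
    intro a b w v
    have h1 := map_add (Bx w) (a • x + b • y) v
    have h2 := map_add (Bx w) (a • x) (b • y)
    have h3 := map_zsmul (Bx w) a x
    have h4 := map_zsmul (Bx w) b y
    simp only [AddMonoidHom.mk', AddMonoidHom.coe_mk, ZeroHom.coe_mk, Bx] at h1 h2 h3 h4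
    rw [h1, h2, h3, h4]
  have hBsub : ∀ (v u w : V), B (v - u) w = B v w - B u w := fun v u w => map_sub (By w) v u
  -- torsion of pairing values
  have htor : ∀ v w : V, ∃ cI : ℤ, B v w = cI • e := by
    intro v w
    refine hcover _ ?_
    have h := map_nsmul (By w) m v
    simp only [AddMonoidHom.mk', AddMonoidHom.coe_mk, ZeroHom.coe_mk, By] at h
    rw [← h, hmtor, ]
    exact map_zero (By w)
  have hB0 : ∀ w : V, B 0 w = 0 := fun w => map_zero (By w)
  have hBexp1 : ∀ (a b : ℤ) (k w : V), B (a • x + b • y + k) w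
      = a • B x w + b • B y w + B k w := by
    intro a b k w
    have h1 := map_add (By w) (a • x + b • y) k
    simp only [AddMonoidHom.mk', AddMonoidHom.coe_mk, ZeroHom.coe_mk, By] at h1
    rw [h1, hBexp0]
  -- the bijection Φ : ZMod m × ZMod m × K ≃ V
  let Φ : ZMod m × ZMod m × K → V :=
    fun p => ((p.1.val : ℤ)) • x + ((p.2.1.val : ℤ)) • y + (p.2.2 : V)
  have hsurj : Function.Surjective Φ := by
    intro v
    obtain ⟨c₁, hc₁⟩ := htor v x
    obtain ⟨c₂, hc₂⟩ := htor v y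
    set aI : ℤ := ((c₂ : ZMod m).val : ℤ) with haI
    set bI : ℤ := (((-c₁ : ℤ) : ZMod m).val : ℤ) with hbI
    have hcombx : B (aI • x + bI • y) x = c₁ • e := by
      rw [hBexp0, halt, hyx, smul_zero, zero_add, smul_neg, hbI, hrede, neg_smul, neg_neg]
    have hcomby : B (aI • x + bI • y) y = c₂ • e := by
      rw [hBexp0, halt, hy, smul_zero, add_zero, haI, hrede]
    have hkK : v - (aI • x + bI • y) ∈ K := by
      rw [hKmem]
      constructor
      · rw [hBsub, hcombx, hc₁, sub_self]
      · rw [hBsub, hcomby, hc₂, sub_self]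
    refine ⟨⟨(c₂ : ZMod m), ((-c₁ : ℤ) : ZMod m), ⟨v - (aI • x + bI • y), hkK⟩⟩, ?_⟩
    show aI • x + bI • y + (v - (aI • x + bI • y)) = v
    abel
  have hred2 : ∀ a₁ a₂ : ZMod m, (m : ℤ) ∣ ((a₁.val : ℤ) - (a₂.val : ℤ)) → a₁ = a₂ := by
    intro a₁ a₂ hdvd
    have h := (ZMod.intCast_zmod_eq_zero_iff_dvd _ m).mpr hdvd
    push_cast at h
    simp only [ZMod.natCast_val, ZMod.cast_id] at h
    exact sub_eq_zero.mp h
  have hinj : Function.Injective Φ := by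
    rintro ⟨a₁, b₁, k₁⟩ ⟨a₂, b₂, k₂⟩ hpq
    have hpq' : ((a₁.val : ℤ)) • x + ((b₁.val : ℤ)) • y + (k₁ : V)
        = ((a₂.val : ℤ)) • x + ((b₂.val : ℤ)) • y + (k₂ : V) := hpq
    set cA : ℤ := (a₁.val : ℤ) - (a₂.val : ℤ) with hcA
    set cB : ℤ := (b₁.val : ℤ) - (b₂.val : ℤ) with hcB
    have hz : cA • x + cB • y + ((k₁ : V) - (k₂ : V)) = 0 := by
      rw [hcA, hcB, sub_smul, sub_smul, ← sub_eq_zero.mpr hpq']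
      abel
    have hky1 : B ((k₁ : V) - (k₂ : V)) y = 0 := by
      rw [hBsub, ((hKmem _).mp k₁.2).2, ((hKmem _).mp k₂.2).2, sub_self]
    have hkx1 : B ((k₁ : V) - (k₂ : V)) x = 0 := by
      rw [hBsub, ((hKmem _).mp k₁.2).1, ((hKmem _).mp k₂.2).1, sub_self]
    have hBzy : cA • e = 0 := by
      have h := hBexp1 cA cB ((k₁ : V) - (k₂ : V)) y
      rw [hz, hB0, hy, halt, smul_zero, add_zero, hky1, add_zero] at h
      exact h.symm
    have hBzx : cB • e = 0 := by
      have h := hBexp1 cA cB ((k₁ : V) - (k₂ : V)) x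
      rw [hz, hB0, hyx, halt, smul_zero, zero_add, hkx1, add_zero, smul_neg] at h
      rw [← neg_eq_zero]
      exact h.symm
    have hdA : (m : ℤ) ∣ cA := (horde' cA).mp hBzy
    have hdB : (m : ℤ) ∣ cB := (horde' cB).mp hBzx
    have hk12 : (k₁ : V) = (k₂ : V) := by
      have := hz
      rw [hzero x cA hdA, hzero y cB hdB, zero_add, zero_add, sub_eq_zero] at this
      exact this
    have hA : a₁ = a₂ := hred2 _ _ hdA
    have hB' : b₁ = b₂ := hred2 _ _ hdB
    simp [Prod.ext_iff, hA, hB', Subtype.ext hk12]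
  -- cardinality count
  have hcardeq : Nat.card (ZMod m × ZMod m × K) = Nat.card V :=
    Nat.card_eq_of_bijective Φ ⟨hinj, hsurj⟩
  rw [Nat.card_prod, Nat.card_prod, Nat.card_zmod] at hcardeq
  have hKpos : 0 < Nat.card K := Nat.card_pos
  have hKlt : Nat.card K < c := by
    rw [← hcard, ← hcardeq]
    calc Nat.card K < 2 * Nat.card K := by omega
    _ ≤ m * Nat.card K := Nat.mul_le_mul_right _ hm1
    _ ≤ m * (m * Nat.card K) := Nat.mul_le_mul_left _ (Nat.le_mul_of_pos_left _ hm0)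
  obtain ⟨k, hk⟩ := IH (Nat.card K) hKlt K (fun a b => B (a : V) (b : V))
    (fun a b w => by
      show B ((a + b : K) : V) w = _
      rw [AddSubgroup.coe_add]
      exact hB1 _ _ _)
    (fun a w w' => by
      show B (a : V) ((w + w' : K) : V) = _
      rw [AddSubgroup.coe_add]
      exact hB2 _ _ _)
    (fun a => halt _)
    (fun a ha => by
      refine Subtype.ext ?_
      apply hnd
      intro w
      obtain ⟨⟨pa, pb, pk⟩, hp⟩ := hsurj w
      rw [← hp]
      show B (a : V) (((pa.val : ℤ)) • x + ((pb.val : ℤ)) • y + (pk : V)) = 0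
      rw [hBw2]
      have hax : B (a : V) x = 0 := ((hKmem _).mp a.2).1
      have hay : B (a : V) y = 0 := ((hKmem _).mp a.2).2
      rw [hax, hay]
      simpa using ha pk)
    (fun v => by
      refine Subtype.ext ?_
      push_cast
      exact hel _)
    rfl
  exact ⟨m * k, by rw [← hcard, ← hcardeq, hk]; ring⟩

open scoped Matrix

/-- For an integer skew-symmetric `n×n` matrix `M` and `ℓ ≥ 1`, the image of the induced
map `(ℤ/ℓℤ)ⁿ → (ℤ/ℓℤ)ⁿ`, `v ↦ Mv`, has cardinality a perfect square. -/
theorem card_image_skew_symmetric_sq (n ℓ : ℕ) (hn : 1 ≤ n) (hℓ : 1 ≤ ℓ)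
    (M : Matrix (Fin n) (Fin n) ℤ) (hM : M.transpose = -M) :
    ∃ k : ℕ, Nat.card (Set.range fun v : Fin n → ZMod ℓ =>
        (M.map (Int.cast : ℤ → ZMod ℓ)).mulVec v) = k ^ 2 := by
  haveI : NeZero ℓ := ⟨by omega⟩
  set A : Matrix (Fin n) (Fin n) (ZMod ℓ) := M.map (Int.cast : ℤ → ZMod ℓ) with hA
  have hAT : Aᵀ = -A := by
    ext i j
    have h := congrFun (congrFun hM i) j
    simp only [Matrix.transpose_apply, Matrix.neg_apply] at h
    simp [hA, Matrix.transpose_apply, Matrix.map_apply, Matrix.neg_apply, h]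
  -- the key dot-product identity
  have hdp : ∀ v w : Fin n → ZMod ℓ, v ⬝ᵥ A.mulVec w = -((A.mulVec v) ⬝ᵥ w) := by
    intro v w
    rw [Matrix.dotProduct_mulVec]
    have h1 : A.vecMul v = -(A.mulVec v) := by
      rw [← Matrix.mulVec_transpose, hAT, Matrix.neg_mulVec]
    rw [h1, neg_dotProduct]
  -- the range as a submodule
  set W : Submodule (ZMod ℓ) (Fin n → ZMod ℓ) := LinearMap.range (Matrix.mulVecLin A) with hW
  have hset : (W : Set (Fin n → ZMod ℓ)) = Set.range (fun v : Fin n → ZMod ℓ => A.mulVec v) := by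
    ext u
    simp [hW, LinearMap.mem_range, Matrix.mulVecLin_apply]
  have hmem : ∀ x : W, ∃ v, A.mulVec v = (x : Fin n → ZMod ℓ) := by
    intro x
    obtain ⟨v, hv⟩ := LinearMap.mem_range.mp x.2
    exact ⟨v, by simpa [Matrix.mulVecLin_apply] using hv⟩
  have hmem' : ∀ v : Fin n → ZMod ℓ, A.mulVec v ∈ W :=
    fun v => LinearMap.mem_range.mpr ⟨v, by simp [Matrix.mulVecLin_apply]⟩
  classical
  let pre : W → (Fin n → ZMod ℓ) := fun x => Classical.choose (hmem x)
  have hpre : ∀ x : W, A.mulVec (pre x) = (x : Fin n → ZMod ℓ) :=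
    fun x => Classical.choose_spec (hmem x)
  let B : W → W → ZMod ℓ := fun x y => pre x ⬝ᵥ (y : Fin n → ZMod ℓ)
  have hker : ∀ u : Fin n → ZMod ℓ, A.mulVec u = 0 → ∀ y : W, u ⬝ᵥ (y : Fin n → ZMod ℓ) = 0 := by
    intro u hu y
    obtain ⟨w, hw⟩ := hmem y
    rw [← hw, hdp, hu, zero_dotProduct, neg_zero]
  have hB1 : ∀ x x' z : W, B (x + x') z = B x z + B x' z := by
    intro x x' z
    have h : A.mulVec (pre (x + x') - (pre x + pre x')) = 0 := by
      rw [Matrix.mulVec_sub, Matrix.mulVec_add, hpre, hpre, hpre]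
      rw [Submodule.coe_add]
      abel
    have h2 := hker _ h z
    rw [sub_dotProduct, add_dotProduct, sub_eq_zero] at h2
    exact h2
  have hB2 : ∀ x z z' : W, B x (z + z') = B x z + B x z' := by
    intro x z z'
    show pre x ⬝ᵥ ((z : Fin n → ZMod ℓ) + (z' : Fin n → ZMod ℓ)) = _
    rw [dotProduct_add]
  have halt : ∀ x : W, B x x = 0 := by
    intro x
    show pre x ⬝ᵥ (x : Fin n → ZMod ℓ) = 0
    rw [← hpre x]
    set v := pre x
    -- lift to the integers
    let w : Fin n → ℤ := fun i => ((v i).val : ℤ)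
    have hwv : ∀ i, ((w i : ℤ) : ZMod ℓ) = v i := by
      intro i
      simp [w, ZMod.natCast_val, ZMod.cast_id]
    have hcomp : ⇑(Int.castRingHom (ZMod ℓ)) ∘ w = v := funext hwv
    have hmapA : M.map ⇑(Int.castRingHom (ZMod ℓ)) = A := rfl
    have hcast : (Int.castRingHom (ZMod ℓ)) (w ⬝ᵥ M.mulVec w) = v ⬝ᵥ A.mulVec v := by
      rw [RingHom.map_dotProduct, hcomp]
      congr 1
      funext i
      show (Int.castRingHom (ZMod ℓ)) ((M.mulVec w) i) = (A.mulVec v) i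
      rw [RingHom.map_mulVec, hcomp, hmapA]
    have hint : w ⬝ᵥ M.mulVec w = 0 := by
      have h1 : w ⬝ᵥ M.mulVec w = -((M.mulVec w) ⬝ᵥ w) := by
        rw [Matrix.dotProduct_mulVec]
        have h2 : M.vecMul w = -(M.mulVec w) := by
          rw [← Matrix.mulVec_transpose, hM, Matrix.neg_mulVec]
        rw [h2, neg_dotProduct]
      have h3 : (M.mulVec w) ⬝ᵥ w = w ⬝ᵥ M.mulVec w := dotProduct_comm _ _
      omega
    rw [← hcast, hint, map_zero]
  have hnd : ∀ x : W, (∀ z : W, B x z = 0) → x = 0 := by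
    intro x hx
    have h1 : ∀ u, pre x ⬝ᵥ A.mulVec u = 0 := fun u => hx ⟨A.mulVec u, hmem' u⟩
    have h2 : ∀ u, (A.mulVec (pre x)) ⬝ᵥ u = 0 := by
      intro u
      have := h1 u
      rw [hdp, neg_eq_zero] at this
      exact this
    have h3 : A.mulVec (pre x) = 0 := by
      funext j
      have := h2 (Pi.single j 1)
      rwa [dotProduct_single, mul_one] at this
    refine Subtype.ext ?_
    rw [← hpre x, h3]
    rfl
  have hel : ∀ v : W, ℓ • v = 0 := by
    intro v
    refine Subtype.ext ?_
    show ℓ • (v : Fin n → ZMod ℓ) = 0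
    funext i
    show ℓ • (v : Fin n → ZMod ℓ) i = 0
    rw [nsmul_eq_mul]
    simp
  obtain ⟨k, hk⟩ := card_sq_of_alt ℓ (Nat.card W) W B hB1 hB2 halt hnd hel rfl
  refine ⟨k, ?_⟩
  rw [← hk]
  exact Nat.card_congr (Equiv.setCongr hset.symm)
end

section
/- Let R be a ring, S ⊆ R a multiplicatively closed set of regular elements satisfying the two-sided Ore condition, and let ι : R → RS⁻¹ be the localization. Then extension and contraction of ideals give mutually inverse, inclusion-preserving bijections between the set of completely prime ideals P of R with P ∩ S = ∅ and the set of completely prime ideals of RS⁻¹; explicitly P ↦ PS⁻¹ and Q ↦ ι⁻¹(Q). -/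
/-- A two-sided ideal `P` of a ring `R` is completely prime if it is proper and
`ab ∈ P` implies `a ∈ P` or `b ∈ P` (equivalently, `R/P` is a domain). -/
def TwoSidedIdeal.IsCompletelyPrime {R : Type*} [Ring R] (P : TwoSidedIdeal R) : Prop :=
  (1 : R) ∉ P ∧ ∀ a b : R, a * b ∈ P → a ∈ P ∨ b ∈ P

namespace OreCorrAux

open OreLocalization

variable {R : Type*} [Ring R] {S : Submonoid R} [OreSet S]

/-- The candidate extension ideal, as a set. -/
def ES (P : TwoSidedIdeal R) : Set (OreLocalization S R) :=
  {x | ∃ (p : R) (s : S), p ∈ P ∧ x = p /ₒ s}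

variable {P : TwoSidedIdeal R} (hP : P.IsCompletelyPrime) (hS : ∀ s ∈ S, s ∉ P)

include hP hS in
/-- The extension ideal, as a two-sided ideal. -/
lemma es_isIdeal :
    (0 : OreLocalization S R) ∈ ES (S := S) P ∧
    (∀ {x y : OreLocalization S R}, x ∈ ES (S := S) P → y ∈ ES (S := S) P →
      x + y ∈ ES (S := S) P) ∧
    (∀ {x : OreLocalization S R}, x ∈ ES (S := S) P → -x ∈ ES (S := S) P) ∧
    (∀ {x y : OreLocalization S R}, y ∈ ES (S := S) P → x * y ∈ ES (S := S) P) ∧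
    (∀ {x y : OreLocalization S R}, x ∈ ES (S := S) P → x * y ∈ ES (S := S) P) := by
  refine ⟨⟨0, 1, P.zero_mem, (zero_oreDiv _).symm⟩, ?_, ?_, ?_, ?_⟩
  · rintro x y ⟨p, s, hp, rfl⟩ ⟨q, t, hq, rfl⟩
    obtain ⟨rb, sb, h⟩ := oreCondition (s : R) t
    refine ⟨sb • p + rb * q, sb * s, P.add_mem (P.mul_mem_left _ _ hp) (P.mul_mem_left _ _ hq),
      oreDiv_add_char s t rb sb h⟩
  · rintro x ⟨p, s, hp, rfl⟩
    exact ⟨-p, s, P.neg_mem hp, (OreLocalization.neg_def p s)⟩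
  · rintro x y ⟨p, s, hp, rfl⟩
    induction x with
    | _ r t =>
      obtain ⟨r', s', h⟩ := oreCondition r s
      exact ⟨r' * p, s' * t, P.mul_mem_left _ _ hp, oreDiv_mul_char r p t s r' s' h⟩
  · rintro x y ⟨p, s, hp, rfl⟩
    induction y with
    | _ r t =>
      obtain ⟨r', s', h⟩ := oreCondition p t
      have hr' : (s' : R) * p ∈ P := P.mul_mem_left _ _ hp
      rw [h] at hr'
      rcases hP.2 _ _ hr' with h' | h'
      · exact ⟨r' * r, s' * s, P.mul_mem_right _ _ h', oreDiv_mul_char p r s t r' s' h⟩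
      · exact absurd h' (hS t t.2)
include hP hS in
lemma mem_es_iff {r : R} {s : S} : (r /ₒ s) ∈ ES (S := S) P ↔ r ∈ P := by
  constructor
  · rintro ⟨p, w, hp, h⟩
    rw [oreDiv_eq_iff] at h
    obtain ⟨u, v, h1, h2⟩ := h
    rw [Submonoid.smul_def, smul_eq_mul, smul_eq_mul] at h1
    have hup : (u : R) * p ∈ P := P.mul_mem_left _ _ hp
    rw [h1] at hup
    rcases hP.2 _ _ hup with hv | hr
    · exfalso
      have : (u : R) * w ∈ P := by rw [h2]; exact P.mul_mem_right _ _ hv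
      exact hS _ (S.mul_mem u.2 w.2) this
    · exact hr
  · exact fun h => ⟨r, s, h, rfl⟩

include hP hS in
lemma span_eq_es :
    (TwoSidedIdeal.span ((numeratorRingHom : R →+* OreLocalization S R) '' (P : Set R))
      : Set (OreLocalization S R)) = ES (S := S) P := by
  obtain ⟨h0, hadd, hneg, hml, hmr⟩ := es_isIdeal hP hS
  apply subset_antisymm
  · have : TwoSidedIdeal.span ((numeratorRingHom : R →+* OreLocalization S R) '' (P : Set R)) ≤
        TwoSidedIdeal.mk' (ES (S := S) P) h0 hadd hneg hml hmr := by
      intro x hx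
      rw [TwoSidedIdeal.mem_span_iff] at hx
      refine hx _ ?_
      rintro y ⟨p, hp, rfl⟩
      rw [SetLike.mem_coe, TwoSidedIdeal.mem_mk']
      exact ⟨p, 1, hp, numeratorHom_apply⟩
    intro x hx
    have := this hx
    rwa [TwoSidedIdeal.mem_mk'] at this
  · rintro x ⟨p, s, hp, rfl⟩
    have h1 : (p : R) /ₒ (1 : S) ∈
        TwoSidedIdeal.span ((numeratorRingHom : R →+* OreLocalization S R) '' (P : Set R)) :=
      TwoSidedIdeal.subset_span ⟨p, hp, numeratorHom_apply⟩
    have h2 := TwoSidedIdeal.mul_mem_left _ ((1 : R) /ₒ s) _ h1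
    rw [OreLocalization.one_div_mul, one_mul] at h2
    exact h2
end OreCorrAux

open OreLocalization in
/-- Let `S` be a multiplicatively closed set of regular elements of `R` satisfying the
two-sided Ore condition. Extension `P ↦ PS⁻¹` and contraction `Q ↦ ι⁻¹(Q)` along the
localization map `ι : R → RS⁻¹` are mutually inverse, inclusion-preserving bijections
between completely prime ideals of `R` disjoint from `S` and completely prime ideals
of `RS⁻¹`. -/
theorem completelyPrime_ore_localization_correspondence
    {R : Type*} [Ring R] (S : Submonoid R) [OreSet S]
    (hreg : ∀ s ∈ S, IsRegular s)
    (hore : ∀ (r : R) (s : S), ∃ (r' : R) (s' : S), r * (s' : R) = (s : R) * r') :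
    letI ι : R →+* OreLocalization S R := numeratorRingHom
    letI ext : TwoSidedIdeal R → TwoSidedIdeal (OreLocalization S R) :=
      fun P => TwoSidedIdeal.span (ι '' (P : Set R))
    letI con : TwoSidedIdeal (OreLocalization S R) → TwoSidedIdeal R :=
      fun Q => TwoSidedIdeal.comap ι Q
    -- extension of a completely prime ideal disjoint from `S` is completely prime,
    -- and contraction recovers it:
    (∀ P : TwoSidedIdeal R, P.IsCompletelyPrime → (∀ s ∈ S, s ∉ P) →
      (ext P).IsCompletelyPrime ∧ con (ext P) = P) ∧
    -- contraction of a completely prime ideal is completely prime, disjoint from `S`,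
    -- and extension recovers it:
    (∀ Q : TwoSidedIdeal (OreLocalization S R), Q.IsCompletelyPrime →
      (con Q).IsCompletelyPrime ∧ (∀ s ∈ S, s ∉ con Q) ∧ ext (con Q) = Q) ∧
    -- both maps preserve inclusion:
    (∀ P P' : TwoSidedIdeal R, P ≤ P' → ext P ≤ ext P') ∧
    (∀ Q Q' : TwoSidedIdeal (OreLocalization S R), Q ≤ Q' → con Q ≤ con Q') := by
  set ι : R →+* OreLocalization S R := numeratorRingHom with hι
  set ext : TwoSidedIdeal R → TwoSidedIdeal (OreLocalization S R) :=
    fun P => TwoSidedIdeal.span (ι '' (P : Set R)) with hext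
  set con : TwoSidedIdeal (OreLocalization S R) → TwoSidedIdeal R :=
    fun Q => TwoSidedIdeal.comap ι Q with hcon
  have memspan : ∀ (P : TwoSidedIdeal R), P.IsCompletelyPrime → (∀ s ∈ S, s ∉ P) →
      ∀ (x : OreLocalization S R), x ∈ ext P ↔ x ∈ OreCorrAux.ES (S := S) P := by
    intro P hP hS x
    rw [← SetLike.mem_coe]
    show x ∈ (TwoSidedIdeal.span (ι '' (P : Set R)) : Set (OreLocalization S R)) ↔ _
    rw [OreCorrAux.span_eq_es hP hS]
  have extCP : ∀ (P : TwoSidedIdeal R), P.IsCompletelyPrime → (∀ s ∈ S, s ∉ P) →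
      (ext P).IsCompletelyPrime := by
    intro P hP hS
    constructor
    · intro h1
      rw [memspan P hP hS, OreLocalization.one_def, OreCorrAux.mem_es_iff hP hS] at h1
      exact hP.1 h1
    · intro a b hab
      induction a with
      | _ r₁ s₁ =>
        induction b with
        | _ r₂ s₂ =>
          obtain ⟨r', s', h, heq⟩ := oreDivMulChar' r₁ r₂ s₁ s₂
          rw [heq, memspan P hP hS, OreCorrAux.mem_es_iff hP hS] at hab
          rcases hP.2 _ _ hab with h' | h'
          · have : (s' : R) * r₁ ∈ P := by rw [h]; exact P.mul_mem_right _ _ h'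
            rcases hP.2 _ _ this with h'' | h''
            · exact absurd h'' (hS _ s'.2)
            · exact Or.inl ((memspan P hP hS _).2 ((OreCorrAux.mem_es_iff hP hS).2 h''))
          · exact Or.inr ((memspan P hP hS _).2 ((OreCorrAux.mem_es_iff hP hS).2 h'))
  refine ⟨?_, ?_, ?_, ?_⟩
  · intro P hP hS
    refine ⟨extCP P hP hS, ?_⟩
    apply TwoSidedIdeal.ext
    intro r
    rw [TwoSidedIdeal.mem_comap]
    show ι r ∈ ext P ↔ _
    rw [memspan P hP hS, show ι r = r /ₒ (1 : S) from numeratorHom_apply,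
      OreCorrAux.mem_es_iff hP hS]
  · intro Q hQ
    have hconCP : (con Q).IsCompletelyPrime := by
      constructor
      · intro h1
        rw [TwoSidedIdeal.mem_comap, map_one] at h1
        exact hQ.1 h1
      · intro a b hab
        rw [TwoSidedIdeal.mem_comap, map_mul] at hab
        rcases hQ.2 _ _ hab with h | h
        · exact Or.inl ((TwoSidedIdeal.mem_comap _).2 h)
        · exact Or.inr ((TwoSidedIdeal.mem_comap _).2 h)
    have hconS : ∀ s ∈ S, s ∉ con Q := by
      intro s hs hmem
      rw [TwoSidedIdeal.mem_comap, show ι s = s /ₒ (1 : S) from numeratorHom_apply] at hmem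
      have h1 := Q.mul_mem_left ((1 : R) /ₒ ⟨s, hs⟩) _ hmem
      rw [OreLocalization.mul_div_one, one_mul,
        OreLocalization.div_eq_one' hs] at h1
      exact hQ.1 h1
    refine ⟨hconCP, hconS, ?_⟩
    apply TwoSidedIdeal.ext
    intro x
    rw [memspan _ hconCP hconS]
    constructor
    · rintro ⟨p, s, hp, rfl⟩
      rw [TwoSidedIdeal.mem_comap, show ι p = p /ₒ (1 : S) from numeratorHom_apply] at hp
      have h1 := Q.mul_mem_left ((1 : R) /ₒ s) _ hp
      rwa [OreLocalization.one_div_mul, one_mul] at h1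
    · intro hx
      induction x with
      | _ r s =>
        have h1 := Q.mul_mem_left ((s : R) /ₒ (1 : S)) _ hx
        rw [OreLocalization.mul_cancel] at h1
        refine ⟨r, s, ?_, rfl⟩
        rw [TwoSidedIdeal.mem_comap, show ι r = r /ₒ (1 : S) from numeratorHom_apply]
        exact h1
  · intro P P' h
    exact TwoSidedIdeal.span_mono (Set.image_mono h)
  · intro Q Q' h x hx
    rw [TwoSidedIdeal.mem_comap] at hx ⊢
    exact h hx
end

section
/- Let A be a K-algebra, Γ ⊆ A a two-sided Ore set of regular elements, and φ̂ : AΓ⁻¹ → End_K(V) an algebra homomorphism such that the representation (φ̂, V) of AΓ⁻¹ is irreducible. If the restriction φ of φ̂ to A (via the canonical map A → AΓ⁻¹) satisfies: for every g ∈ Γ there are ξ_g ∈ K* and ℓ_g ≥ 1 with φ(g)^{ℓ_g} = ξ_g·Id_V, then the restricted representation (φ, V) of A is also irreducible. -/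
/-- Let `Γ` be a two-sided Ore set of regular elements of a `K`-algebra `A`, with
localization `ι : A → AΓ⁻¹ = B` (so `ι` is injective, elements of `Γ` become units, and
every element of `B` is a one-sided fraction over `ι(A)`). If `(φ̂, V)` is an irreducible
representation of `B` and the restriction `φ = φ̂ ∘ ι` satisfies `φ(g)^{ℓ_g} = ξ_g·Id`
with `ξ_g ≠ 0` for every `g ∈ Γ`, then the restriction `(φ, V)` is an irreducible
representation of `A`. -/
theorem restriction_of_irreducible_rep_of_localization
    {K : Type*} [Field K] {A B : Type*} [Ring A] [Ring B] [Algebra K A] [Algebra K B]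
    {V : Type*} [AddCommGroup V] [Module K V] [Nontrivial V]
    (Γ : Submonoid A) (hreg : ∀ g ∈ Γ, IsRegular g)
    (ι : A →ₐ[K] B) (hinj : Function.Injective ι)
    (hunit : ∀ g ∈ Γ, IsUnit (ι g))
    (hfracR : ∀ b : B, ∃ a : A, ∃ g ∈ Γ, b * ι g = ι a)
    (hfracL : ∀ b : B, ∃ a : A, ∃ g ∈ Γ, ι g * b = ι a)
    (φhat : B →ₐ[K] Module.End K V)
    (hirr : ∀ W : Submodule K V, (∀ b : B, ∀ v ∈ W, φhat b v ∈ W) → W = ⊥ ∨ W = ⊤)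
    (hpow : ∀ g ∈ Γ, ∃ ξ : K, ξ ≠ 0 ∧ ∃ ℓ : ℕ, 1 ≤ ℓ ∧
      (φhat (ι g)) ^ ℓ = ξ • (1 : Module.End K V)) :
    ∀ W : Submodule K V, (∀ a : A, ∀ v ∈ W, φhat (ι a) v ∈ W) → W = ⊥ ∨ W = ⊤ := by
  intro W hW
  apply hirr
  intro b v hv
  obtain ⟨a, g, hg, hab⟩ := hfracR b
  obtain ⟨ξ, hξ, ℓ, hℓ, hpowg⟩ := hpow g hg
  have key : φhat b = ξ⁻¹ • (φhat (ι a) * (φhat (ι g)) ^ (ℓ - 1)) := by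
    have h1 : φhat b * φhat (ι g) = φhat (ι a) := by rw [← map_mul, hab]
    have h2 : φhat b * (φhat (ι g)) ^ ℓ = φhat (ι a) * (φhat (ι g)) ^ (ℓ - 1) := by
      conv_lhs => rw [show ℓ = 1 + (ℓ - 1) by omega, pow_add, pow_one, ← mul_assoc, h1]
    rw [hpowg] at h2
    have h3 : ξ • φhat b = φhat (ι a) * (φhat (ι g)) ^ (ℓ - 1) := by
      rw [← h2, mul_smul_comm, mul_one]
    rw [← h3, smul_smul, inv_mul_cancel₀ hξ, one_smul]
  rw [key]
  have hgk : ((φhat (ι g)) ^ (ℓ - 1)) v ∈ W := by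
    rw [← map_pow, ← map_pow]
    exact hW _ v hv
  simpa using W.smul_mem ξ⁻¹ (hW a _ hgk)
end
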